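/- The point (8(w^2−8)(w^2−5)(w^2−2)(5w^2−16), 72(w−2)^2(w+2)^2(w^2−8)(w^2−5)(w^2−2)(5w^2−16)) lies on the curve y^2 = x^3 + AA_26(w)x^2 + BB_26(w)x over Q(w), where AA_26(w) = 9472 − 7808w^2 + 2688w^4 − 488w^6 + 37w^8 and BB_26(w) = 32(w^2−8)^3(w^2−5)(w^2−2)^3(5w^2−16), and this point has order 6 in the group of Q(w)-points (for all but finitely many specializations, it has order 6). -/

import Mathlib

open RatFunc in
/-- The curve `y² = x³ + AA₂₆(w)x² + BB₂₆(w)x` over `ℚ(w)`. -/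
noncomputable def curveAA26 : WeierstrassCurve.Affine (RatFunc ℚ) :=
  { a₁ := 0, a₂ := 9472 - 7808 * X ^ 2 + 2688 * X ^ 4 - 488 * X ^ 6 + 37 * X ^ 8,
    a₃ := 0,
    a₄ := 32 * (X ^ 2 - 8) ^ 3 * (X ^ 2 - 5) * (X ^ 2 - 2) ^ 3 * (5 * X ^ 2 - 16),
    a₆ := 0 }

/-!
Write `T = (0, 0)`, a point of order 2 since `a₆ = 0`. The tangent at `P` meets the curve
again at `-2P`, which gives `2P = (4(w²-8)²(w²-2)², 36(w-2)²(w+2)²(w²-8)²(w²-2)²)`, and the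
secant through `2P` and `P` meets the curve again at `-T = T`, so `3P = T`. Hence `6P = 2T = 0`,
while `2P` and `3P` are affine points, so `P` has order exactly 6.
-/

open WeierstrassCurve.Affine

namespace WeierstrassCurve.Affine

variable {F : Type*} [Field F] {W : WeierstrassCurve.Affine F}

lemma nonsingular_of_Y_ne_negY {x y : F} (h : W.Equation x y) (hy : y ≠ W.negY x y) :
    W.Nonsingular x y :=
  (nonsingular_iff x y).mpr ⟨h, Or.inr hy⟩

variable [DecidableEq F]

lemma Point.some_add_self_of_tangent_slope {x y x' y' ℓ : F} {h : W.Nonsingular x y}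
    (h' : W.Nonsingular x' y') (hy : y ≠ W.negY x y)
    (hℓ : 3 * x ^ 2 + 2 * W.a₂ * x + W.a₄ - W.a₁ * y = ℓ * (y - W.negY x y))
    (hx' : W.addX x x ℓ = x') (hy' : W.addY x x y ℓ = y') :
    Point.some _ _ h + Point.some _ _ h = Point.some _ _ h' := by
  have hslope : W.slope x x y y = ℓ := by
    rw [slope_of_Y_ne rfl hy, div_eq_iff (sub_ne_zero.mpr hy), hℓ]
  subst hx' hy'
  rw [Point.add_self_of_Y_ne hy]
  simp only [hslope]

lemma Point.some_add_some_of_secant_slope {x₁ y₁ x₂ y₂ x₃ y₃ ℓ : F}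
    {h₁ : W.Nonsingular x₁ y₁} {h₂ : W.Nonsingular x₂ y₂} (h₃ : W.Nonsingular x₃ y₃)
    (hx : x₁ ≠ x₂) (hℓ : y₁ - y₂ = ℓ * (x₁ - x₂)) (hx₃ : W.addX x₁ x₂ ℓ = x₃)
    (hy₃ : W.addY x₁ x₂ y₁ ℓ = y₃) :
    Point.some _ _ h₁ + Point.some _ _ h₂ = Point.some _ _ h₃ := by
  have hslope : W.slope x₁ x₂ y₁ y₂ = ℓ := by
    rw [slope_of_X_ne hx, div_eq_iff (sub_ne_zero.mpr hx), hℓ]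
  subst hx₃ hy₃
  rw [Point.add_of_X_ne hx]
  simp only [hslope]

lemma Point.two_nsmul_some_zero_zero (ha₃ : W.a₃ = 0) (h : W.Nonsingular 0 0) :
    2 • Point.some _ _ h = 0 := by
  rw [two_nsmul]
  exact Point.add_self_of_Y_eq (by simp [negY, ha₃])

end WeierstrassCurve.Affine

lemma addOrderOf_eq_six {G : Type*} [AddMonoid G] {P : G} (h6 : 6 • P = 0) (h2 : 2 • P ≠ 0)
    (h3 : 3 • P ≠ 0) : addOrderOf P = 6 := by
  refine addOrderOf_eq_of_nsmul_and_div_prime_nsmul (by norm_num) h6 fun p hp hdvd => ?_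
  rcases (Nat.Prime.dvd_mul hp).mp (show p ∣ 2 * 3 from hdvd) with h | h
  · rwa [(Nat.prime_dvd_prime_iff_eq hp Nat.prime_two).mp h]
  · rwa [(Nat.prime_dvd_prime_iff_eq hp Nat.prime_three).mp h]

lemma RatFunc.algebraMap_ne_zero_of_eval_ne_zero {K : Type*} [Field K] {p : Polynomial K}
    {a : K} (h : p.eval a ≠ 0) : algebraMap (Polynomial K) (RatFunc K) p ≠ 0 :=
  RatFunc.algebraMap_ne_zero fun hp => h (by simp [hp])

section curveAA26

open RatFunc

-- The product of these factors is a polynomial in `w` that does not vanish at `w = 1`.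
lemma curveAA26_factors_ne_zero :
    (X - 2 : RatFunc ℚ) ≠ 0 ∧ (X + 2 : RatFunc ℚ) ≠ 0 ∧ (X ^ 2 - 8 : RatFunc ℚ) ≠ 0 ∧
      (X ^ 2 - 5 : RatFunc ℚ) ≠ 0 ∧ (X ^ 2 - 2 : RatFunc ℚ) ≠ 0 ∧
      (5 * X ^ 2 - 16 : RatFunc ℚ) ≠ 0 := by
  have h := algebraMap_ne_zero_of_eval_ne_zero (a := 1)
    (p := (Polynomial.X - 2 : Polynomial ℚ) * (Polynomial.X + 2) * (Polynomial.X ^ 2 - 8) *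
      (Polynomial.X ^ 2 - 5) * (Polynomial.X ^ 2 - 2) * (5 * Polynomial.X ^ 2 - 16)) (by norm_num)
  simp only [map_mul, map_sub, map_add, map_pow, map_ofNat, algebraMap_X, ne_eq,
    mul_eq_zero, not_or] at h
  tauto

lemma curveAA26_negY (x y : RatFunc ℚ) : curveAA26.negY x y = -y := by
  simp [curveAA26, negY]

lemma curveAA26_Y_ne_negY {x y : RatFunc ℚ} (hy : y ≠ 0) : y ≠ curveAA26.negY x y := by
  rwa [curveAA26_negY, Ne, CharZero.eq_neg_self_iff]

local notation "xP" => (8 * (X ^ 2 - 8) * (X ^ 2 - 5) * (X ^ 2 - 2) * (5 * X ^ 2 - 16) : RatFunc ℚ)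
local notation "yP" => (72 * (X - 2) ^ 2 * (X + 2) ^ 2 * (X ^ 2 - 8) * (X ^ 2 - 5) * (X ^ 2 - 2) * (5 * X ^ 2 - 16) : RatFunc ℚ)
local notation "x2P" => (4 * (X ^ 2 - 8) ^ 2 * (X ^ 2 - 2) ^ 2 : RatFunc ℚ)
local notation "y2P" => (36 * (X - 2) ^ 2 * (X + 2) ^ 2 * (X ^ 2 - 8) ^ 2 * (X ^ 2 - 2) ^ 2 : RatFunc ℚ)

lemma curveAA26_yP_ne_zero : yP ≠ 0 := by
  obtain ⟨h₁, h₂, h₃, h₄, h₅, h₆⟩ := curveAA26_factors_ne_zero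
  simp [h₁, h₂, h₃, h₄, h₅, h₆]

lemma curveAA26_x2P_ne_xP : x2P ≠ xP := by
  obtain ⟨h₁, h₂, h₃, -, h₅, -⟩ := curveAA26_factors_ne_zero
  rw [Ne, ← sub_eq_zero,
    show x2P - xP = -36 * (X ^ 2 - 8) * (X ^ 2 - 2) * (X - 2) ^ 2 * (X + 2) ^ 2 by ring]
  simp [h₁, h₂, h₃, h₅]

lemma curveAA26_nonsingular_P : curveAA26.Nonsingular xP yP := by
  refine nonsingular_of_Y_ne_negY ?_ (curveAA26_Y_ne_negY curveAA26_yP_ne_zero)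
  rw [equation_iff]
  simp only [curveAA26]
  ring

lemma curveAA26_nonsingular_two_P : curveAA26.Nonsingular x2P y2P := by
  obtain ⟨h₁, h₂, h₃, -, h₅, -⟩ := curveAA26_factors_ne_zero
  refine nonsingular_of_Y_ne_negY ?_ (curveAA26_Y_ne_negY (by simp [h₁, h₂, h₃, h₅]))
  rw [equation_iff]
  simp only [curveAA26]
  ring

lemma curveAA26_nonsingular_zero : curveAA26.Nonsingular 0 0 := by
  obtain ⟨-, -, h₃, h₄, h₅, h₆⟩ := curveAA26_factors_ne_zero
  exact nonsingular_zero.mpr ⟨rfl, Or.inr (by simp [curveAA26, h₃, h₄, h₅, h₆])⟩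

variable [DecidableEq (RatFunc ℚ)]

lemma curveAA26_some_P_add_self :
    Point.some _ _ curveAA26_nonsingular_P + Point.some _ _ curveAA26_nonsingular_P =
      Point.some _ _ curveAA26_nonsingular_two_P := by
  refine Point.some_add_self_of_tangent_slope (ℓ := 11 * X ^ 4 - 92 * X ^ 2 + 176) _
    (curveAA26_Y_ne_negY curveAA26_yP_ne_zero) ?_ ?_ ?_
  · rw [curveAA26_negY]
    simp only [curveAA26]
    ring
  · simp only [curveAA26, addX]
    ring
  · simp only [curveAA26, addY, negAddY, addX, negY]
    ring

lemma curveAA26_some_two_P_add_P :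
    Point.some _ _ curveAA26_nonsingular_two_P + Point.some _ _ curveAA26_nonsingular_P =
      Point.some _ _ curveAA26_nonsingular_zero := by
  refine Point.some_add_some_of_secant_slope (ℓ := 9 * (X ^ 2 - 4) ^ 2) _ curveAA26_x2P_ne_xP
    ?_ ?_ ?_
  · ring
  · simp only [curveAA26, addX]
    ring
  · simp only [curveAA26, addY, negAddY, addX, negY]
    ring

end curveAA26

open Classical in
open RatFunc in
/-- The point `(8(w²-8)(w²-5)(w²-2)(5w²-16), 72(w-2)²(w+2)²(w²-8)(w²-5)(w²-2)(5w²-16))`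
is a nonsingular point of the curve `y² = x³ + AA₂₆(w)x² + BB₂₆(w)x` over `ℚ(w)`,
of order 6 in the group of `ℚ(w)`-points. -/
theorem stmt11 :
    ∃ h : curveAA26.Nonsingular
        (8 * (X ^ 2 - 8) * (X ^ 2 - 5) * (X ^ 2 - 2) * (5 * X ^ 2 - 16))
        (72 * (X - 2) ^ 2 * (X + 2) ^ 2 * (X ^ 2 - 8) * (X ^ 2 - 5) * (X ^ 2 - 2) *
          (5 * X ^ 2 - 16)),
      addOrderOf (WeierstrassCurve.Affine.Point.some _ _ h) = 6 := by
  refine ⟨curveAA26_nonsingular_P, ?_⟩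
  set P := Point.some _ _ curveAA26_nonsingular_P
  have h2P : 2 • P = Point.some _ _ curveAA26_nonsingular_two_P := by
    rw [two_nsmul, curveAA26_some_P_add_self]
  have h3P : 3 • P = Point.some _ _ curveAA26_nonsingular_zero := by
    rw [succ_nsmul, h2P, curveAA26_some_two_P_add_P]
  refine addOrderOf_eq_six ?_ (h2P ▸ Point.some_ne_zero _) (h3P ▸ Point.some_ne_zero _)
  rw [show 6 • P = 2 • 3 • P from (smul_smul 2 3 P).symm, h3P, Point.two_nsmul_some_zero_zero rfl]
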